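/- arXiv:2011.12614 — 2 statements merged into one kernel-verified Lean document; each statement's English description precedes it below -/
import Mathlib

section
/- Coarea formula for the nonlocal perimeter: for every measurable function v : ℝ^n → ℝ, J_K(v) = ∫_{−∞}^{+∞} Per_K({x ∈ ℝ^n : v(x) > s}) ds, as an identity in [0,∞], where J_K(v) := (1/2)∫_{ℝ^n}∫_{ℝ^n} |v(x)−v(y)| K(x−y) dx dy. -/
open MeasureTheory Set Filter Metric Topology
open scoped ENNReal Pointwise

noncomputable section

abbrev Euc (n : ℕ) := EuclideanSpace ℝ (Fin n)

/-- Admissible kernel: measurable, nonnegative and even away from the origin,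
with `∫ min(1,|x|) K(x) dx < ∞`. -/
def KernelOK {n : ℕ} (K : Euc n → ℝ) : Prop :=
  Measurable K ∧ (∀ x : Euc n, x ≠ 0 → 0 ≤ K x) ∧ (∀ x : Euc n, x ≠ 0 → K (-x) = K x) ∧
    (∫⁻ x : Euc n, ENNReal.ofReal (min 1 ‖x‖ * K x)) < ⊤

/-- The `K`-perimeter of `E` in `Ω`. -/
def perK {n : ℕ} (K : Euc n → ℝ) (E Ω : Set (Euc n)) : ℝ≥0∞ :=
  (∫⁻ x in E, ∫⁻ y in Ω \ E, ENNReal.ofReal (K (x - y))) +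
  (∫⁻ x in E ∩ Ω, ∫⁻ y in (Ω ∪ E)ᶜ, ENNReal.ofReal (K (x - y)))

/-- The (total) `K`-perimeter of `E`. -/
def perKtot {n : ℕ} (K : Euc n → ℝ) (E : Set (Euc n)) : ℝ≥0∞ :=
  ∫⁻ x in E, ∫⁻ y in Eᶜ, ENNReal.ofReal (K (x - y))

/-- `A` is compactly contained in `Ω`. -/
def CptIn {n : ℕ} (A Ω : Set (Euc n)) : Prop :=
  IsCompact (closure A) ∧ closure A ⊆ Ω

/-- `E` is `K`-outward minimizing in `Ω`. -/
def OutMin {n : ℕ} (K : Euc n → ℝ) (E Ω : Set (Euc n)) : Prop :=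
  ∀ F : Set (Euc n), MeasurableSet F → E ⊆ F → CptIn (F \ E) Ω →
    perK K E Ω ≤ perK K F Ω

/-- `E` is strongly `K`-outward minimizing in `Ω` with constant `δ`. -/
def StrongOutMin {n : ℕ} (K : Euc n → ℝ) (δ : ℝ) (E Ω : Set (Euc n)) : Prop :=
  ∀ F : Set (Euc n), MeasurableSet F → E ⊆ F → CptIn (F \ E) Ω →
    perK K E Ω + ENNReal.ofReal δ * volume (F \ E) ≤ perK K F Ω

end
noncomputable section
open MeasureTheory Set Filter Metric Topology
open scoped ENNReal Pointwise

/-- The truncated `K`-curvature of `G` at `x`, with truncation parameter `ε`: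
`∫_{ℝⁿ∖B(x,ε)} (χ_{Gᶜ}(y) − χ_G(y)) K(x−y) dy`. -/
def truncCurv {n : ℕ} (K : Euc n → ℝ) (G : Set (Euc n)) (x : Euc n) (ε : ℝ) : ℝ :=
  ∫ y in (Metric.ball x ε)ᶜ,
    ((Gᶜ).indicator (fun _ => (1:ℝ)) y - G.indicator (fun _ => (1:ℝ)) y) * K (x - y)

/-- `G` has compact boundary of class `C^{1,1}`: the boundary is compact, and `G` is the
sublevel set of a `C^1` function with Lipschitz gradient which is nondegenerate on the
boundary. -/
def HasCptC11Boundary {n : ℕ} (G : Set (Euc n)) : Prop :=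
  IsCompact (frontier G) ∧
  ∃ φ : Euc n → ℝ, ContDiff ℝ 1 φ ∧ (∃ L : NNReal, LipschitzWith L (fderiv ℝ φ)) ∧
    G = {x | φ x ≤ 0} ∧ frontier G = {x | φ x = 0} ∧
    ∀ x ∈ frontier G, fderiv ℝ φ x ≠ 0

/-- `H^K_A(x) ≥ c` in the viscosity sense: every set `G` with compact `C^{1,1}` boundary
with `G ⊆ A` and `x ∈ ∂G` has `K`-curvature at least `c` at `x` (the curvature being the
limit of the truncated curvatures). -/
def ViscCurvGE {n : ℕ} (K : Euc n → ℝ) (A : Set (Euc n)) (x : Euc n) (c : ℝ) : Prop :=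
  ∀ G : Set (Euc n), HasCptC11Boundary G → G ⊆ A → x ∈ frontier G →
    ∀ L : ℝ, Tendsto (truncCurv K G x) (𝓝[>] (0:ℝ)) (𝓝 L) → c ≤ L

/-- Signed distance function from `E` (positive inside). -/
def sgnDist {n : ℕ} (E : Set (Euc n)) (x : Euc n) : ℝ :=
  Metric.infDist x Eᶜ - Metric.infDist x E

/-- The Almgren–Taylor–Wang energy `Per_K(G) − (1/h)∫_G d_E`. -/
def atwEnergy {n : ℕ} (K : Euc n → ℝ) (E : Set (Euc n)) (h : ℝ) (G : Set (Euc n)) : ℝ :=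
  (perKtot K G).toReal - (1/h) * ∫ x in G, sgnDist E x

/-- `T` is an ATW minimizer for `E` at step `h`: it minimizes the ATW energy among all
measurable sets (competitors with infinite energy being irrelevant). -/
def ATWMin {n : ℕ} (K : Euc n → ℝ) (E : Set (Euc n)) (h : ℝ) (T : Set (Euc n)) : Prop :=
  MeasurableSet T ∧ perKtot K T < ⊤ ∧ IntegrableOn (sgnDist E) T ∧
  ∀ G : Set (Euc n), MeasurableSet G → perKtot K G < ⊤ → IntegrableOn (sgnDist E) G →
    atwEnergy K E h T ≤ atwEnergy K E h G

/-- The set of Lebesgue density-one points of `T`. -/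
def densityPts {n : ℕ} (T : Set (Euc n)) : Set (Euc n) :=
  {x | Tendsto (fun ρ : ℝ =>
      volume (T ∩ Metric.closedBall x ρ) / volume (Metric.closedBall x ρ))
    (𝓝[>] (0:ℝ)) (𝓝 1)}

/-- The nonlocal functional `J_K(v) = ½∬ |v(x)−v(y)| K(x−y) dx dy`. -/
def JK {n : ℕ} (K : Euc n → ℝ) (v : Euc n → ℝ) : ℝ≥0∞ :=
  (1/2 : ℝ≥0∞) * ∫⁻ x : Euc n, ∫⁻ y : Euc n,
    ENNReal.ofReal |v x - v y| * ENNReal.ofReal (K (x - y))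

end

open MeasureTheory Set Filter Metric Topology
open scoped ENNReal

/-- coarea formula for the nonlocal perimeter. -/
theorem JK_coarea {n : ℕ} (K : Euc n → ℝ) (hK : KernelOK K)
    (v : Euc n → ℝ) (hv : Measurable v) :
    JK K v = ∫⁻ s : ℝ, perKtot K {x : Euc n | s < v x} := by
  classical
  have hkm : Measurable fun p : Euc n × Euc n => ENNReal.ofReal (K (p.1 - p.2)) :=
    ENNReal.measurable_ofReal.comp (hK.1.comp (measurable_fst.sub measurable_snd))
  set Φ : ℝ × Euc n × Euc n → ℝ≥0∞ := fun p =>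
    if v p.2.2 ≤ p.1 ∧ p.1 < v p.2.1 then ENNReal.ofReal (K (p.2.1 - p.2.2)) else 0 with hΦ_def
  have hΦm : Measurable Φ := by
    apply Measurable.ite
    · exact (measurableSet_le (hv.comp (measurable_snd.comp measurable_snd)) measurable_fst).inter
        (measurableSet_lt measurable_fst (hv.comp (measurable_fst.comp measurable_snd)))
    · exact hkm.comp measurable_snd
    · exact measurable_const
  -- step 1: rewrite perKtot via Φ
  have hA : ∀ s : ℝ, perKtot K {x : Euc n | s < v x} = ∫⁻ x, ∫⁻ y, Φ (s, x, y) := by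
    intro s
    have hEs : MeasurableSet {x : Euc n | s < v x} := measurableSet_lt measurable_const hv
    unfold perKtot
    rw [← lintegral_indicator hEs]
    refine lintegral_congr fun x => ?_
    by_cases hx : s < v x
    · have hx' : x ∈ {x : Euc n | s < v x} := hx
      rw [Set.indicator_of_mem hx', ← lintegral_indicator hEs.compl]
      refine lintegral_congr fun y => ?_
      by_cases hy : v y ≤ s
      · have hyE : y ∈ ({x : Euc n | s < v x})ᶜ := by simpa [not_lt] using hy
        rw [Set.indicator_of_mem hyE]
        simp [Φ, hy, hx]
      · have hyE : y ∉ ({x : Euc n | s < v x})ᶜ := by simpa [not_lt] using hy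
        rw [Set.indicator_of_notMem hyE]
        simp [Φ, hy]
    · have hx' : x ∉ {x : Euc n | s < v x} := hx
      rw [Set.indicator_of_notMem hx']
      symm
      simp only [Φ]
      rw [lintegral_eq_zero_iff]
      · refine Filter.Eventually.of_forall fun y => ?_
        simp [hx]
      · exact hΦm.comp (measurable_prodMk_left.comp measurable_prodMk_left)
  -- measurability of inner integrals
  have hΦ1 : Measurable fun z : ℝ × Euc n => ∫⁻ y, Φ (z.1, z.2, y) := by
    apply Measurable.lintegral_prod_right'
      (f := fun q : (ℝ × Euc n) × Euc n => Φ (q.1.1, q.1.2, q.2))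
    exact hΦm.comp ((measurable_fst.fst.prodMk (measurable_fst.snd.prodMk measurable_snd)))
  -- swap s and x
  have hswap1 : ∫⁻ s : ℝ, ∫⁻ x, ∫⁻ y, Φ (s, x, y) = ∫⁻ x, ∫⁻ s : ℝ, ∫⁻ y, Φ (s, x, y) :=
    lintegral_lintegral_swap hΦ1.aemeasurable
  -- swap s and y inside, then integrate in s
  have hinner : ∀ x : Euc n, (∫⁻ s : ℝ, ∫⁻ y, Φ (s, x, y))
      = ∫⁻ y, ENNReal.ofReal (K (x - y)) * ENNReal.ofReal (v x - v y) := by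
    intro x
    have hswap2 : ∫⁻ s : ℝ, ∫⁻ y, Φ (s, x, y) = ∫⁻ y, ∫⁻ s : ℝ, Φ (s, x, y) := by
      refine lintegral_lintegral_swap ?_
      exact (hΦm.comp ((measurable_fst.prodMk
        (measurable_const.prodMk measurable_snd)))).aemeasurable
    rw [hswap2]
    refine lintegral_congr fun y => ?_
    have : (fun s : ℝ => Φ (s, x, y)) =
        (Set.Ico (v y) (v x)).indicator fun _ => ENNReal.ofReal (K (x - y)) := by
      funext s
      simp [Φ, Set.indicator_apply, Set.mem_Ico]
    rw [this, lintegral_indicator_const measurableSet_Ico, Real.volume_Ico]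
  -- so the RHS equals A
  have hRHS : (∫⁻ s : ℝ, perKtot K {x : Euc n | s < v x})
      = ∫⁻ x, ∫⁻ y, ENNReal.ofReal (v x - v y) * ENNReal.ofReal (K (x - y)) := by
    calc ∫⁻ s : ℝ, perKtot K {x : Euc n | s < v x}
        = ∫⁻ s : ℝ, ∫⁻ x, ∫⁻ y, Φ (s, x, y) := lintegral_congr hA
      _ = ∫⁻ x, ∫⁻ s : ℝ, ∫⁻ y, Φ (s, x, y) := hswap1
      _ = ∫⁻ x, ∫⁻ y, ENNReal.ofReal (K (x - y)) * ENNReal.ofReal (v x - v y) :=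
          lintegral_congr hinner
      _ = _ := by
          refine lintegral_congr fun x => lintegral_congr fun y => mul_comm _ _
  -- now the LHS
  have hm1 : Measurable fun p : Euc n × Euc n => ENNReal.ofReal (v p.1 - v p.2)
      * ENNReal.ofReal (K (p.1 - p.2)) :=
    (ENNReal.measurable_ofReal.comp ((hv.comp measurable_fst).sub (hv.comp measurable_snd))).mul hkm
  have hm2 : Measurable fun p : Euc n × Euc n => ENNReal.ofReal (v p.2 - v p.1)
      * ENNReal.ofReal (K (p.1 - p.2)) :=
    (ENNReal.measurable_ofReal.comp ((hv.comp measurable_snd).sub (hv.comp measurable_fst))).mul hkm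
  have habs : ∀ a : ℝ, ENNReal.ofReal |a| = ENNReal.ofReal a + ENNReal.ofReal (-a) := by
    intro a
    rcases le_total 0 a with h | h
    · rw [abs_of_nonneg h, ENNReal.ofReal_of_nonpos (neg_nonpos.2 h), add_zero]
    · rw [abs_of_nonpos h, ENNReal.ofReal_of_nonpos h, zero_add]
  have hsplit : (∫⁻ x, ∫⁻ y, ENNReal.ofReal |v x - v y| * ENNReal.ofReal (K (x - y)))
      = (∫⁻ x, ∫⁻ y, ENNReal.ofReal (v x - v y) * ENNReal.ofReal (K (x - y)))
      + (∫⁻ x, ∫⁻ y, ENNReal.ofReal (v y - v x) * ENNReal.ofReal (K (x - y))) := by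
    rw [← lintegral_add_left]
    · refine lintegral_congr fun x => ?_
      rw [← lintegral_add_left]
      · refine lintegral_congr fun y => ?_
        rw [habs (v x - v y), add_mul, neg_sub]
      · exact hm1.comp (measurable_const.prodMk measurable_id)
    · exact Measurable.lintegral_prod_right' (f := fun p : Euc n × Euc n =>
        ENNReal.ofReal (v p.1 - v p.2) * ENNReal.ofReal (K (p.1 - p.2))) hm1
  have hBA : (∫⁻ x, ∫⁻ y, ENNReal.ofReal (v y - v x) * ENNReal.ofReal (K (x - y)))
      = ∫⁻ x, ∫⁻ y, ENNReal.ofReal (v x - v y) * ENNReal.ofReal (K (x - y)) := by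
    rw [lintegral_lintegral_swap hm2.aemeasurable]
    refine lintegral_congr fun a => lintegral_congr fun b => ?_
    by_cases hab : v b < v a
    · have hne : a - b ≠ 0 := by
        intro h
        rw [sub_eq_zero] at h
        rw [h] at hab
        exact lt_irrefl _ hab
      have hev := hK.2.2.1 (a - b) hne
      rw [show b - a = -(a - b) from (neg_sub a b).symm, hev]
    · rw [ENNReal.ofReal_of_nonpos (by linarith [not_lt.mp hab]), zero_mul, zero_mul]
  -- finish
  unfold JK
  rw [hsplit, hBA, hRHS, ← two_mul, ← mul_assoc, one_div,
    ENNReal.inv_mul_cancel two_ne_zero ENNReal.ofNat_ne_top, one_mul]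
end

section
/- Let Ω ⊆ ℝ^n be open and let u : ℝ^n → [0,∞) be a measurable function whose support is compactly contained in Ω and such that for every s ≥ 0 the superlevel set {x : u(x) > s} is K-outward minimizing in Ω with Per_K({u > s},Ω) < ∞. Then for every measurable v : ℝ^n → [0,∞) with v ≥ u almost everywhere and support compactly contained in Ω, one has J_K(u) ≤ J_K(v). -/
open MeasureTheory Set Filter Metric Topology
open scoped ENNReal Pointwise

open MeasureTheory Set Filter Metric Topology
open scoped ENNReal

/-! For even `K`, the one-dimensional layer-cake identity `|a - b| = |{s : exactly one of a, b
exceeds s}|` and Tonelli give the coarea formula `J_K(w) = ∫ Per_K({w > s}) ds`, so it suffices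
to compare superlevel sets. Below height `0` the superlevel set of `u` is the whole space, of
perimeter zero. Above it, `{u > s} ∪ {v > s}` is an admissible outward variation of `{u > s}`
which is a.e. equal to `{v > s}`, and for sets inside `Ω` the perimeter in `Ω` is the total
perimeter. -/

theorem Real.volume_setOf_xor_lt (a b : ℝ) :
    volume {s : ℝ | Xor (s < a) (s < b)} = ENNReal.ofReal |a - b| := by
  have : {s : ℝ | Xor (s < a) (s < b)} = Ico (min a b) (max a b) := by
    ext s; simp only [mem_ofPred_eq, mem_Ico, min_le_iff, lt_max_iff, Xor]; grind
  rw [this, Real.volume_Ico, max_sub_min_eq_abs']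

section Symmetric

variable {α : Type*} [MeasurableSpace α] {μ : Measure α} [SFinite μ]

theorem lintegral_prod_compl_union_eq_two_mul {k : α × α → ℝ≥0∞} (hk : Measurable k)
    (hsymm : ∀ x y, x ≠ y → k (x, y) = k (y, x)) {E : Set α} (hE : MeasurableSet E) :
    ∫⁻ p in E ×ˢ Eᶜ ∪ Eᶜ ×ˢ E, k p ∂μ.prod μ = 2 * ∫⁻ x in E, ∫⁻ y in Eᶜ, k (x, y) ∂μ ∂μ := by
  have hdisj : Disjoint (E ×ˢ Eᶜ) (Eᶜ ×ˢ E) := disjoint_prod.2 (Or.inl disjoint_compl_right)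
  rw [lintegral_union (hE.compl.prod hE) hdisj, setLIntegral_prod _ hk.aemeasurable,
    setLIntegral_prod_symm _ hk.aemeasurable, two_mul]
  congr 1
  refine setLIntegral_congr_fun hE fun x hx => setLIntegral_congr_fun hE.compl fun y hy => ?_
  exact hsymm y x (ne_of_mem_of_not_mem hx hy).symm

end Symmetric

section Kernel

variable {n : ℕ} {K : Euc n → ℝ}

theorem two_mul_perKtot (hKm : Measurable K) (hKe : ∀ x : Euc n, x ≠ 0 → K (-x) = K x)
    {E : Set (Euc n)} (hE : MeasurableSet E) :
    2 * perKtot K E = ∫⁻ p in E ×ˢ Eᶜ ∪ Eᶜ ×ˢ E, ENNReal.ofReal (K (p.1 - p.2)) := by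
  rw [Measure.volume_eq_prod, lintegral_prod_compl_union_eq_two_mul _ _ hE, perKtot]
  · fun_prop
  · intro x y hxy
    rw [← neg_sub, hKe _ (sub_ne_zero.2 hxy.symm)]

theorem JK_eq_lintegral_perKtot (hKm : Measurable K) (hKe : ∀ x : Euc n, x ≠ 0 → K (-x) = K x)
    {w : Euc n → ℝ} (hw : Measurable w) :
    JK K w = ∫⁻ s, perKtot K {x | s < w x} := by
  set k : Euc n × Euc n → ℝ≥0∞ := fun p => ENNReal.ofReal (K (p.1 - p.2))
  set S : Set (ℝ × (Euc n × Euc n)) := {q | Xor (q.1 < w q.2.1) (q.1 < w q.2.2)}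
  have hk : Measurable k := by fun_prop
  have hS : MeasurableSet S :=
    (measurableSet_lt measurable_fst (by fun_prop)).symmDiff
      (measurableSet_lt measurable_fst (by fun_prop))
  have layer_cake (p : Euc n × Euc n) :
      ENNReal.ofReal |w p.1 - w p.2| * k p = ∫⁻ s, S.indicator (k ∘ Prod.snd) (s, p) := by
    rw [← Real.volume_setOf_xor_lt, mul_comm, ← lintegral_indicator_const]
    · rfl
    · exact (measurableSet_lt measurable_id measurable_const).symmDiff
        (measurableSet_lt measurable_id measurable_const)
  have slice (s : ℝ) : (fun p => S.indicator (k ∘ Prod.snd) (s, p)) =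
      ({x | s < w x} ×ˢ {x | s < w x}ᶜ ∪ {x | s < w x}ᶜ ×ˢ {x | s < w x}).indicator k := by
    ext p
    simp only [indicator_apply]
    congr 1
    simp only [S, Xor, mem_ofPred_eq, mem_union, mem_prod, mem_compl_iff, eq_iff_iff]
    tauto
  calc JK K w = 2⁻¹ * ∫⁻ p, ENNReal.ofReal |w p.1 - w p.2| * k p ∂volume.prod volume := by
        rw [JK, one_div, lintegral_prod _ (by fun_prop)]
    _ = 2⁻¹ * ∫⁻ s, ∫⁻ p, S.indicator (k ∘ Prod.snd) (s, p) ∂volume.prod volume := by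
        simp_rw [layer_cake]
        rw [lintegral_lintegral_swap]
        exact (((hk.comp measurable_snd).indicator hS).comp
          (measurable_snd.prodMk measurable_fst)).aemeasurable
    _ = 2⁻¹ * ∫⁻ s, 2 * perKtot K {x | s < w x} := by
        congr 1
        refine lintegral_congr fun s => ?_
        have hE : MeasurableSet {x | s < w x} := measurableSet_lt measurable_const hw
        rw [slice, lintegral_indicator ((hE.prod hE.compl).union (hE.compl.prod hE)),
          ← Measure.volume_eq_prod, two_mul_perKtot hKm hKe hE]
    _ = ∫⁻ s, perKtot K {x | s < w x} := by
        rw [lintegral_const_mul' _ _ ENNReal.ofNat_ne_top, ← mul_assoc,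
          ENNReal.inv_mul_cancel two_ne_zero ENNReal.ofNat_ne_top, one_mul]

theorem perK_eq_perKtot (hKm : Measurable K) {E Ω : Set (Euc n)} (hΩ : MeasurableSet Ω)
    (hEΩ : E ⊆ Ω) : perK K E Ω = perKtot K E := by
  have hinner : Measurable fun x => ∫⁻ y in Ω \ E, ENNReal.ofReal (K (x - y)) :=
    Measurable.lintegral_prod_right'
      (f := fun p : Euc n × Euc n => ENNReal.ofReal (K (p.1 - p.2))) (by fun_prop)
  rw [perK, perKtot, inter_eq_left.2 hEΩ, union_eq_self_of_subset_right hEΩ,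
    ← lintegral_add_left hinner]
  have hout : Eᶜ \ Ω = Ωᶜ := by rw [sdiff_eq, inter_eq_right.2 (compl_subset_compl.2 hEΩ)]
  refine lintegral_congr fun x => ?_
  rw [← lintegral_inter_add_sdiff _ Eᶜ hΩ, inter_comm, ← sdiff_eq, hout]

theorem perKtot_congr {E F : Set (Euc n)} (h : E =ᵐ[volume] F) : perKtot K E = perKtot K F := by
  rw [perKtot, perKtot, Measure.restrict_congr_set h]
  exact lintegral_congr fun x => setLIntegral_congr (ae_eq_set_compl_compl.2 h)

theorem CptIn.mono {A B Ω : Set (Euc n)} (h : CptIn B Ω) (hAB : A ⊆ B) : CptIn A Ω :=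
  ⟨h.1.of_isClosed_subset isClosed_closure (closure_mono hAB), (closure_mono hAB).trans h.2⟩

theorem CptIn.setOf_lt_subset {u : Euc n → ℝ} {Ω : Set (Euc n)}
    (h : CptIn (Function.support u) Ω) {s : ℝ} (hs : 0 ≤ s) : {x | s < u x} ⊆ Ω :=
  fun _ hx => h.2 (subset_closure (hs.trans_lt hx).ne')

theorem OutMin.perKtot_le (hKm : Measurable K) {E F Ω : Set (Euc n)} (hE : OutMin K E Ω)
    (hΩ : MeasurableSet Ω) (hEm : MeasurableSet E) (hFm : MeasurableSet F) (hEΩ : E ⊆ Ω)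
    (hFΩ : F ⊆ Ω) (hEF : E ≤ᵐ[volume] F) (hFE : CptIn (F \ E) Ω) :
    perKtot K E ≤ perKtot K F :=
  calc perKtot K E = perK K E Ω := (perK_eq_perKtot hKm hΩ hEΩ).symm
    _ ≤ perK K (F ∪ E) Ω := hE _ (hFm.union hEm) subset_union_right (by rwa [union_sdiff_right])
    _ = perKtot K (F ∪ E) := perK_eq_perKtot hKm hΩ (union_subset hFΩ hEΩ)
    _ = perKtot K F := perKtot_congr (union_ae_eq_left_iff_ae_subset.2 hEF)

end Kernel

/-- a nonnegative function whose superlevel sets are `K`-outward minimizing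
in `Ω` minimizes `J_K` among larger functions supported compactly in `Ω`. -/
theorem JK_min_of_outMin_levels {n : ℕ} (K : Euc n → ℝ) (hK : KernelOK K)
    (Ω : Set (Euc n)) (hΩ : IsOpen Ω) (u : Euc n → ℝ) (hu : Measurable u)
    (hupos : ∀ x, 0 ≤ u x) (husupp : CptIn (Function.support u) Ω)
    (hlevel : ∀ s : ℝ, 0 ≤ s →
      OutMin K {x : Euc n | s < u x} Ω ∧ perK K {x : Euc n | s < u x} Ω < ⊤) :
    ∀ v : Euc n → ℝ, Measurable v → (∀ x, 0 ≤ v x) → (∀ᵐ x : Euc n, u x ≤ v x) →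
      CptIn (Function.support v) Ω → JK K u ≤ JK K v := by
  intro v hv _ huv hvsupp
  rw [JK_eq_lintegral_perKtot hK.1 hK.2.2.1 hu, JK_eq_lintegral_perKtot hK.1 hK.2.2.1 hv]
  refine lintegral_mono fun s => ?_
  rcases lt_or_ge s 0 with hs | hs
  · have huniv : {x | s < u x} = univ := eq_univ_of_forall fun x => hs.trans_le (hupos x)
    simp [huniv, perKtot]
  · refine (hlevel s hs).1.perKtot_le hK.1 hΩ.measurableSet
      (measurableSet_lt measurable_const hu) (measurableSet_lt measurable_const hv)
      (husupp.setOf_lt_subset hs) (hvsupp.setOf_lt_subset hs) ?_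
      (hvsupp.mono fun x hx => (hs.trans_lt hx.1).ne')
    filter_upwards [huv] with x hx using fun hxu => hxu.trans_le hx
end
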